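/- Let b and k be vectors in ℝ² such that k does not satisfy k ≤ b componentwise, and b >_lex k lexicographically. Then for any vector k' in ℝ² with k' <_lex k and such that k' and k are mutually non-dominated and unequal, k' does not satisfy k' ≤ b componentwise (i.e., k' cannot dominate or equal b). -/

import Mathlib

def LexLt (a b : Fin 2 → ℝ) : Prop :=
  ∃ i, (∀ j, j < i → a j = b j) ∧ a i < b i

theorem LexLt.apply_zero_le {a b : Fin 2 → ℝ} (h : LexLt a b) : a 0 ≤ b 0 := by
  obtain ⟨i, heq, hlt⟩ := h
  fin_cases i
  · exact hlt.le
  · exact (heq 0 (by decide)).le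

theorem LexLt.apply_one_lt_of_not_le {a b : Fin 2 → ℝ} (h : LexLt a b)
    (hab : ¬ ∀ m, a m ≤ b m) : b 1 < a 1 := by
  by_contra! h1
  exact hab (Fin.forall_fin_two.2 ⟨h.apply_zero_le, h1⟩)

theorem toa_left_subtree_prune_general (b k k' : Fin 2 → ℝ)
    (h1 : ¬ (∀ m, k m ≤ b m))
    (h2 : LexLt k b)
    (h3 : LexLt k' k)
    (hnd1 : ¬ (∀ m, k' m ≤ k m)) :
    ¬ (∀ m, k' m ≤ b m) := fun hk'b =>
  ((h2.apply_one_lt_of_not_le h1).trans (h3.apply_one_lt_of_not_le hnd1)).not_ge (hk'b 1)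

/-- TOA* left-subtree pruning: if k ≰ b componentwise and b >_lex k, then any k'
with k' <_lex k that is mutually non-dominated with (and unequal to) k satisfies
k' ≰ b componentwise. -/
theorem toa_left_subtree_prune (b k k' : Fin 2 → ℝ)
    (h1 : ¬ (∀ m, k m ≤ b m))
    (h2 : LexLt k b)
    (h3 : LexLt k' k)
    (hne : k' ≠ k)
    (hnd1 : ¬ (∀ m, k' m ≤ k m))
    (hnd2 : ¬ (∀ m, k m ≤ k' m)) :
    ¬ (∀ m, k' m ≤ b m) :=
  toa_left_subtree_prune_general b k k' h1 h2 h3 hnd1
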